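/- arXiv:2009.10206 — 2 statements merged into one kernel-verified Lean document; each statement's English description precedes it below -/
import Mathlib

section
/- Let α > −1 and n ∈ ℕ with α + 1 ≥ n, and suppose L_n^{(α+3)} and L_n^{(α)} have no common zeros. Let 0 < x_1 < ⋯ < x_n be the zeros of L_n^{(α)} and 0 < w_1 < ⋯ < w_n be the zeros of L_n^{(α+3)}. Then the zeros interlace: x_1 < w_1 < x_2 < w_2 < ⋯ < x_n < w_n. -/
/-!
At a zero `t > 0` of `L = L_n^{(α)}`, the contiguous relation `L^{(α+1)} = L - L'` and the Laguerre
equation `t L'' = (t - α - 1) L' - n L` give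
`t² L_n^{(α+3)}(t) = (-t² + (n - α - 1) t - (α + 1)(α + 2)) L'(t)`, whose bracket is negative when
`n ≤ α + 1`. So `L_n^{(α+3)}` and `L'` have opposite signs at every zero `x_i`. Writing both
polynomials as `c ∏ (X - ·)`, the sign of `L'(x_i)` is `(-1)^(n-i)` and that of `L_n^{(α+3)}(x_i)`
is `(-1)^#{j | x_i < w_j}`, so this count has the parity of `n + 1 - i`. It is antitone in `i` and
changes parity at each step, so it drops by at least one per step; lying in `[1, n]`, it must equal
`n + 1 - i`, which is the interlacing.
-/

open Polynomial

/-- The generalized Laguerre polynomial `L_n^{(α)}(x) =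
∑_{k=0}^{n} (−1)^k [∏_{j=k+1}^{n}(α+j)] / ((n−k)!·k!) · x^k`. -/
noncomputable def laguerre (α : ℝ) (n : ℕ) : Polynomial ℝ :=
  ∑ k ∈ Finset.range (n + 1),
    Polynomial.C ((-1 : ℝ) ^ k * (∏ j ∈ Finset.Icc (k + 1) n, (α + (j : ℝ))) /
      ((n - k).factorial * k.factorial)) * Polynomial.X ^ k

open Finset Lagrange Nat

theorem Finset.prod_eq_neg_one_pow_card_filter_neg_mul_prod_abs {ι R : Type*} [CommRing R]
    [LinearOrder R] [IsStrictOrderedRing R] (s : Finset ι) (f : ι → R) :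
    ∏ j ∈ s, f j = (-1) ^ #{j ∈ s | f j < 0} * ∏ j ∈ s, |f j| := by
  have hsplit : ∀ j ∈ s, f j = (if f j < 0 then -1 else 1) * |f j| := fun j _ => by
    split_ifs with h
    · rw [abs_of_neg h, neg_one_mul, neg_neg]
    · rw [abs_of_nonneg (not_lt.mp h), one_mul]
  rw [prod_congr rfl hsplit, prod_mul_distrib, prod_ite, prod_const, prod_const_one, mul_one]

theorem Finset.odd_card_filter_neg_add_of_prod_mul_prod_neg {ι κ R : Type*} [CommRing R]
    [LinearOrder R] [IsStrictOrderedRing R] {s : Finset ι} {t : Finset κ} {f : ι → R}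
    {g : κ → R} (h : (∏ j ∈ s, f j) * ∏ j ∈ t, g j < 0) :
    Odd (#{j ∈ s | f j < 0} + #{j ∈ t | g j < 0}) := by
  rw [prod_eq_neg_one_pow_card_filter_neg_mul_prod_abs s,
    prod_eq_neg_one_pow_card_filter_neg_mul_prod_abs t] at h
  rw [mul_mul_mul_comm, ← pow_add] at h
  by_contra heven
  rw [Nat.not_odd_iff_even.1 heven |>.neg_one_pow, one_mul] at h
  exact h.not_ge (by positivity)

theorem Finset.prod_Icc_eq_mul_prod_Icc_add_one {M : Type*} [CommMonoid M] (f : ℕ → M) {a b : ℕ}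
    (h : a ≤ b) : ∏ j ∈ Icc a b, f j = f a * ∏ j ∈ Icc (a + 1) b, f j := by
  rw [Icc_add_one_left_eq_Ioc, mul_prod_Ioc_eq_prod_Icc h]

theorem Finset.prod_Icc_add_one {M : Type*} [CommMonoid M] (f : ℕ → M) (a b : ℕ) :
    ∏ j ∈ Icc a b, f (j + 1) = ∏ j ∈ Icc (a + 1) (b + 1), f j := by
  rw [← map_add_right_Icc, prod_map]
  rfl

theorem Nat.eq_add_one_sub_of_succ_lt {A : ℕ → ℕ} {n : ℕ} (h1 : A 1 ≤ n) (hn : 1 ≤ A n)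
    (hsucc : ∀ i, 1 ≤ i → i < n → A (i + 1) < A i) : ∀ i ∈ Icc 1 n, A i = n + 1 - i := by
  have hdecr : ∀ i j, 1 ≤ i → i ≤ j → j ≤ n → A j + (j - i) ≤ A i := by
    intro i j hi hij hjn
    induction j, hij using Nat.le_induction with
    | base => simp
    | succ j hij ih =>
      have := hsucc j (by omega) (by omega)
      have := ih (by omega)
      omega
  intro i hi
  rw [mem_Icc] at hi
  have := hdecr 1 i le_rfl hi.1 hi.2
  have := hdecr i n hi.1 hi.2 le_rfl
  omega

theorem Lagrange.eq_C_leadingCoeff_mul_nodal {ι F : Type*} [Field F] {p : F[X]} {s : Finset ι}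
    {v : ι → F} (hv : Set.InjOn v s) (hdeg : p.degree = #s)
    (hroots : ∀ i ∈ s, p.eval (v i) = 0) : p = C p.leadingCoeff * nodal s v := by
  have hp : p.leadingCoeff ≠ 0 := by
    rw [leadingCoeff_ne_zero]
    rintro rfl
    simp at hdeg
  refine eq_of_degree_le_of_eval_index_eq s hv hdeg.le ?_ ?_ fun i hi => ?_
  · rw [degree_C_mul hp, degree_nodal, hdeg]
  · rw [leadingCoeff_mul, leadingCoeff_C, nodal_monic.leadingCoeff, mul_one]
  · rw [hroots i hi, eval_mul, eval_nodal_at_node hi, mul_zero]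

theorem Lagrange.eval_derivative_nodal_ne_zero {ι F : Type*} [Field F] [DecidableEq ι]
    {s : Finset ι} {v : ι → F} (hv : Set.InjOn v s) {i : ι} (hi : i ∈ s) :
    (derivative (nodal s v)).eval (v i) ≠ 0 := by
  intro h0
  exact nodalWeight_ne_zero hv hi (by rw [nodalWeight_eq_eval_derivative_nodal hi, h0, inv_zero])

section Interlacing

variable {n : ℕ} {x w : ℕ → ℝ}

theorem card_filter_erase_lt_eq_sub (hx : StrictMonoOn x (Icc 1 n)) {i : ℕ}
    (hi : i ∈ Icc 1 n) : #{j ∈ (Icc 1 n).erase i | x i < x j} = n - i := by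
  have : {j ∈ (Icc 1 n).erase i | x i < x j} = Ioc i n := by
    ext j
    simp only [mem_filter, mem_erase, mem_Ioc]
    constructor
    · rintro ⟨⟨-, hj⟩, hlt⟩
      exact ⟨(hx.lt_iff_lt hi hj).1 hlt, (mem_Icc.1 hj).2⟩
    · rintro ⟨hij, hjn⟩
      have hj : j ∈ Icc 1 n := mem_Icc.2 ⟨by linarith [(mem_Icc.1 hi).1], hjn⟩
      exact ⟨⟨hij.ne', hj⟩, (hx.lt_iff_lt hi hj).2 hij⟩
  rw [this, Nat.card_Ioc]

theorem sub_lt_card_filter_lt_iff (hw : StrictMonoOn w (Icc 1 n)) {i : ℕ} (hi : i ∈ Icc 1 n)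
    {t : ℝ} : n - i < #{j ∈ Icc 1 n | t < w j} ↔ t < w i := by
  obtain ⟨h1i, hin⟩ := mem_Icc.1 hi
  constructor
  · intro h
    by_contra! hle
    have hsub : {j ∈ Icc 1 n | t < w j} ⊆ Ioc i n := fun j hj => by
      obtain ⟨hj, htj⟩ := mem_filter.1 hj
      refine mem_Ioc.2 ⟨?_, (mem_Icc.1 hj).2⟩
      by_contra! hji
      exact absurd (hw.monotoneOn hj hi hji) (by linarith)
    have := card_le_card hsub
    rw [Nat.card_Ioc] at this
    omega
  · intro h
    have hsub : Icc i n ⊆ {j ∈ Icc 1 n | t < w j} := fun j hj => by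
      obtain ⟨hij, hjn⟩ := mem_Icc.1 hj
      have hj : j ∈ Icc 1 n := mem_Icc.2 ⟨h1i.trans hij, hjn⟩
      exact mem_filter.2 ⟨hj, h.trans_le (hw.monotoneOn hi hj hij)⟩
    have := card_le_card hsub
    rw [Nat.card_Icc] at this
    omega

theorem odd_card_filter_lt_add_of_eval_mul_eval_derivative_neg (hx : StrictMonoOn x (Icc 1 n))
    {i : ℕ} (hi : i ∈ Icc 1 n)
    (h : (nodal (Icc 1 n) w).eval (x i) * (derivative (nodal (Icc 1 n) x)).eval (x i) < 0) :
    Odd (#{j ∈ Icc 1 n | x i < w j} + (n - i)) := by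
  rw [eval_nodal_derivative_eval_node_eq hi, eval_nodal, eval_nodal] at h
  have := odd_card_filter_neg_add_of_prod_mul_prod_neg h
  simp only [sub_neg] at this
  rwa [card_filter_erase_lt_eq_sub hx hi] at this

theorem interlace_of_eval_nodal_mul_eval_derivative_nodal_neg (hx : StrictMonoOn x (Icc 1 n))
    (hw : StrictMonoOn w (Icc 1 n))
    (h : ∀ i ∈ Icc 1 n,
      (nodal (Icc 1 n) w).eval (x i) * (derivative (nodal (Icc 1 n) x)).eval (x i) < 0) :
    ∀ i ∈ Icc 1 n, x i < w i ∧ (i < n → w i < x (i + 1)) := by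
  set A : ℕ → ℕ := fun i => #{j ∈ Icc 1 n | x i < w j}
  have hodd (i) (hi : i ∈ Icc 1 n) : Odd (A i + (n - i)) :=
    odd_card_filter_lt_add_of_eval_mul_eval_derivative_neg hx hi (h i hi)
  intro i hi
  have hi' := mem_Icc.1 hi
  have hA : ∀ i ∈ Icc 1 n, A i = n + 1 - i := by
    refine Nat.eq_add_one_sub_of_succ_lt ?_ ?_ fun j hj hjn => ?_
    · simpa using card_filter_le (Icc 1 n) fun j => x 1 < w j
    · obtain ⟨k, hk⟩ := hodd n (mem_Icc.2 ⟨hi'.1.trans hi'.2, le_rfl⟩)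
      omega
    · have hj' : j ∈ Icc 1 n := mem_Icc.2 ⟨hj, hjn.le⟩
      have hj1 : j + 1 ∈ Icc 1 n := mem_Icc.2 ⟨by omega, hjn⟩
      have hle : A (j + 1) ≤ A j := card_le_card <| monotone_filter_right _ fun k _ hk =>
        (hx.lt_iff_lt hj' hj1 |>.2 j.lt_succ_self).trans hk
      obtain ⟨k, hk⟩ := hodd j hj'
      obtain ⟨l, hl⟩ := hodd (j + 1) hj1
      omega
  refine ⟨(sub_lt_card_filter_lt_iff hw hi).1 (by show n - i < A i; rw [hA i hi]; omega),
    fun hin => ?_⟩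
  have hi1 : i + 1 ∈ Icc 1 n := mem_Icc.2 ⟨by omega, hin⟩
  have hne : x (i + 1) ≠ w i := by
    have := left_ne_zero_of_mul (h (i + 1) hi1).ne
    rw [eval_nodal, prod_ne_zero_iff] at this
    exact sub_ne_zero.1 (this i hi)
  by_contra! hle
  have : n - i < A (i + 1) := (sub_lt_card_filter_lt_iff hw hi).2 (hle.lt_of_ne hne)
  rw [hA (i + 1) hi1] at this
  omega

end Interlacing

theorem laguerre_coeff (α : ℝ) (n m : ℕ) :
    (laguerre α n).coeff m = if m ≤ n then
      (-1) ^ m * (∏ j ∈ Icc (m + 1) n, (α + j)) / ((n - m)! * m !) else 0 := by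
  simp only [laguerre, finsetSum_coeff, coeff_C_mul, coeff_X_pow, mul_ite, mul_one, mul_zero,
    sum_ite_eq, mem_range, Nat.lt_succ_iff]

theorem laguerre_coeff_self (α : ℝ) (n : ℕ) : (laguerre α n).coeff n = (-1) ^ n / n ! := by
  simp [laguerre_coeff]

theorem laguerre_degree (α : ℝ) (n : ℕ) : (laguerre α n).degree = n := by
  refine degree_eq_of_le_of_coeff_ne_zero ?_ (by simp [laguerre_coeff_self, factorial_ne_zero])
  exact degree_le_iff_coeff_zero _ _ |>.2 fun m hm => by
    rw [laguerre_coeff, if_neg (by exact_mod_cast hm.not_ge)]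

theorem laguerre_leadingCoeff (α : ℝ) (n : ℕ) : (laguerre α n).leadingCoeff = (-1) ^ n / n ! := by
  rw [leadingCoeff, natDegree_eq_of_degree_eq_some (laguerre_degree α n), laguerre_coeff_self]

theorem laguerre_coeff_succ (α : ℝ) (n m : ℕ) :
    (m + 1) * (α + m + 1) * (laguerre α n).coeff (m + 1) = (m - n) * (laguerre α n).coeff m := by
  rw [laguerre_coeff, laguerre_coeff]
  rcases lt_or_ge m n with hm | hm
  · obtain ⟨k, rfl⟩ := Nat.exists_eq_add_of_lt hm
    rw [if_pos (by omega), if_pos (by omega),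
      prod_Icc_eq_mul_prod_Icc_add_one _ (by omega : m + 1 ≤ m + k + 1)]
    simp only [show m + k + 1 - (m + 1) = k by omega, show m + k + 1 - m = k + 1 by omega,
      factorial_succ]
    push_cast
    field_simp
    ring
  · rcases hm.eq_or_lt with rfl | hm
    · simp
    · simp [show ¬m ≤ n by omega, show ¬m + 1 ≤ n by omega]

theorem laguerre_add_one (α : ℝ) (n : ℕ) :
    laguerre (α + 1) n = laguerre α n - derivative (laguerre α n) := by
  ext m
  rw [coeff_sub, coeff_derivative, laguerre_coeff, laguerre_coeff, laguerre_coeff]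
  rcases lt_or_ge m n with hm | hm
  · obtain ⟨k, rfl⟩ := Nat.exists_eq_add_of_lt hm
    have hshift : ∏ j ∈ Icc (m + 1) (m + k + 1), (α + 1 + (j : ℝ)) =
        (∏ j ∈ Icc (m + 1 + 1) (m + k + 1), (α + j)) * (α + (m + k + 1 + 1 : ℕ)) := by
      rw [← prod_Icc_succ_top (by omega), ← prod_Icc_add_one (fun j : ℕ => α + (j : ℝ))]
      exact prod_congr rfl fun j _ => by push_cast; ring
    rw [if_pos (by omega), if_pos (by omega), if_pos (by omega), hshift,
      prod_Icc_eq_mul_prod_Icc_add_one _ (by omega : m + 1 ≤ m + k + 1)]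
    simp only [show m + k + 1 - (m + 1) = k by omega, show m + k + 1 - m = k + 1 by omega,
      factorial_succ]
    push_cast
    field_simp
    ring
  · rcases hm.eq_or_lt with rfl | hm
    · simp
    · simp [show ¬m ≤ n by omega, show ¬m + 1 ≤ n by omega]

theorem laguerre_ode (α : ℝ) (n : ℕ) :
    X * derivative (derivative (laguerre α n)) + (C (α + 1) - X) * derivative (laguerre α n) +
      C (n : ℝ) * laguerre α n = 0 := by
  ext k
  have hrec := laguerre_coeff_succ α n k
  rcases k with _ | k
  · simp only [coeff_add, sub_mul, coeff_sub, coeff_C_mul, coeff_X_mul_zero, coeff_derivative,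
      coeff_zero]
    push_cast at hrec ⊢
    linear_combination hrec
  · simp only [coeff_add, sub_mul, coeff_sub, coeff_C_mul, coeff_X_mul, coeff_derivative,
      coeff_zero]
    push_cast at hrec ⊢
    linear_combination hrec

theorem laguerre_add_three (α : ℝ) (n : ℕ) :
    X ^ 2 * laguerre (α + 3) n =
      (X ^ 2 - C (2 * n : ℝ) * X - C (n * (α + 2))) * laguerre α n +
      (-X ^ 2 + C (n - α - 1) * X - C ((α + 1) * (α + 2))) * derivative (laguerre α n) := by
  have hode := laguerre_ode α n
  have hode' := congrArg derivative hode
  simp only [derivative_add, derivative_mul, derivative_sub, derivative_X, derivative_C,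
    derivative_zero, zero_mul, zero_add] at hode'
  rw [show α + 3 = α + 1 + 1 + 1 by ring, laguerre_add_one, laguerre_add_one, laguerre_add_one]
  simp only [derivative_sub, C_add, C_mul, C_sub, C_1, map_ofNat, map_natCast] at hode hode' ⊢
  linear_combination (2 * X + C α + 2) * hode - X * hode'

theorem laguerre_eq_C_mul_nodal {α : ℝ} {n : ℕ} {v : ℕ → ℝ} (hv : Set.InjOn v (Icc 1 n))
    (hroots : ∀ i ∈ Icc 1 n, (laguerre α n).eval (v i) = 0) :
    laguerre α n = C ((-1 : ℝ) ^ n / n !) * nodal (Icc 1 n) v := by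
  rw [← laguerre_leadingCoeff α n]
  exact eq_C_leadingCoeff_mul_nodal hv (by rw [laguerre_degree, Nat.card_Icc, Nat.add_sub_cancel])
    hroots

theorem eval_laguerre_add_three_mul_eval_derivative_neg {α : ℝ} {n : ℕ} {t : ℝ} (hα : -1 < α)
    (hn : (n : ℝ) ≤ α + 1) (ht : 0 < t) (hroot : (laguerre α n).eval t = 0)
    (hd : (derivative (laguerre α n)).eval t ≠ 0) :
    (laguerre (α + 3) n).eval t * (derivative (laguerre α n)).eval t < 0 := by
  have hev := congrArg (eval t) (laguerre_add_three α n)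
  simp only [eval_mul, eval_add, eval_sub, eval_neg, eval_pow, eval_X, eval_C, hroot, mul_zero,
    zero_add] at hev
  set D := (derivative (laguerre α n)).eval t
  have hQ : -t ^ 2 + (n - α - 1) * t - (α + 1) * (α + 2) < 0 := by
    have : (n - α - 1) * t ≤ 0 := mul_nonpos_of_nonpos_of_nonneg (by linarith) ht.le
    nlinarith
  have hneg : t ^ 2 * ((laguerre (α + 3) n).eval t * D) < 0 := by
    rw [show t ^ 2 * ((laguerre (α + 3) n).eval t * D) =
      (-t ^ 2 + (n - α - 1) * t - (α + 1) * (α + 2)) * D ^ 2 by linear_combination D * hev]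
    exact mul_neg_of_neg_of_pos hQ (by positivity)
  exact neg_of_mul_neg_right hneg (sq_nonneg t)

theorem laguerre_interlacing_equal_deg_param_three_of_le_general
    (α : ℝ) (hα : -1 < α) (n : ℕ) (hn : (n : ℝ) ≤ α + 1)
    (x : ℕ → ℝ)
    (hxpos : ∀ i ∈ Finset.Icc 1 n, 0 < x i)
    (hxmono : ∀ i ∈ Finset.Icc 1 n, ∀ j ∈ Finset.Icc 1 n, i < j → x i < x j)
    (hxroots : ∀ t : ℝ, (laguerre α n).eval t = 0 ↔ ∃ i ∈ Finset.Icc 1 n, x i = t)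
    (w : ℕ → ℝ)
    (hwmono : ∀ i ∈ Finset.Icc 1 n, ∀ j ∈ Finset.Icc 1 n, i < j → w i < w j)
    (hwroots : ∀ t : ℝ, (laguerre (α + 3) n).eval t = 0 ↔ ∃ i ∈ Finset.Icc 1 n, w i = t) :
    ∀ i ∈ Finset.Icc 1 n, x i < w i ∧ (i < n → w i < x (i + 1)) := by
  have hx : StrictMonoOn x (Icc 1 n) := hxmono
  have hw : StrictMonoOn w (Icc 1 n) := hwmono
  have hL := laguerre_eq_C_mul_nodal hx.injOn fun i hi => (hxroots _).2 ⟨i, hi, rfl⟩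
  have hM := laguerre_eq_C_mul_nodal (α := α + 3) hw.injOn fun i hi => (hwroots _).2 ⟨i, hi, rfl⟩
  refine interlace_of_eval_nodal_mul_eval_derivative_nodal_neg hx hw fun i hi => ?_
  have hd : (derivative (laguerre α n)).eval (x i) ≠ 0 := by
    rw [hL, derivative_C_mul, eval_C_mul]
    exact mul_ne_zero (by simp [factorial_ne_zero n]) (eval_derivative_nodal_ne_zero hx.injOn hi)
  have hneg := eval_laguerre_add_three_mul_eval_derivative_neg hα hn (hxpos i hi)
    ((hxroots _).2 ⟨i, hi, rfl⟩) hd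
  rw [hL, hM, derivative_C_mul, eval_C_mul, eval_C_mul, mul_mul_mul_comm] at hneg
  exact neg_of_mul_neg_right hneg (mul_self_nonneg _)

theorem laguerre_interlacing_equal_deg_param_three_of_le
    (α : ℝ) (hα : -1 < α) (n : ℕ) (hn : (n : ℝ) ≤ α + 1)
    (hnc : ∀ t : ℝ, ¬((laguerre (α + 3) n).eval t = 0 ∧ (laguerre α n).eval t = 0))
    (x : ℕ → ℝ)
    (hxpos : ∀ i ∈ Finset.Icc 1 n, 0 < x i)
    (hxmono : ∀ i ∈ Finset.Icc 1 n, ∀ j ∈ Finset.Icc 1 n, i < j → x i < x j)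
    (hxroots : ∀ t : ℝ, (laguerre α n).eval t = 0 ↔ ∃ i ∈ Finset.Icc 1 n, x i = t)
    (w : ℕ → ℝ)
    (hwpos : ∀ i ∈ Finset.Icc 1 n, 0 < w i)
    (hwmono : ∀ i ∈ Finset.Icc 1 n, ∀ j ∈ Finset.Icc 1 n, i < j → w i < w j)
    (hwroots : ∀ t : ℝ, (laguerre (α + 3) n).eval t = 0 ↔ ∃ i ∈ Finset.Icc 1 n, w i = t) :
    ∀ i ∈ Finset.Icc 1 n, x i < w i ∧ (i < n → w i < x (i + 1)) :=
  laguerre_interlacing_equal_deg_param_three_of_le_general α hα n hn x hxpos hxmono hxroots w hwmono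
    hwroots
end

section
/- For every real α and every n ∈ ℕ, the polynomial identity x²(x + α + 1) · L_n^{(α+4)}(x) = p_3(x) · L_n^{(α+2)}(x) − b_1(x) · L_n^{(α)}(x) holds in ℝ[x], where p_3(x) = (x + α + 3)(x + α + 2)(x + α + 1) − x(x + α + 1)(α + n + 3) − x(x + α + 3)(α + n + 2) and b_1(x) = (x + α + 3)(α + n + 2)(α + n + 1). -/
/-!
Coefficientwise, the contiguous relation
`X L_n^{(α+2)} + (α+n+1) L_n^{(α)} = (X+α+1) L_n^{(α+1)}`
reduces to the identities between the products `∏_{j=k+1}^{n} (α+j)` obtained by shifting `α`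
by one and peeling off an end factor. The theorem is the combination of this relation at
`α`, `α+1` and `α+2` with the coefficients `X(X+α+1)`, `(X+α+1)(X+α+3)` and
`(X+α+3)(α+n+2)`.
-/

open Polynomial

open Finset

section ShiftedProducts

variable {R : Type*} [CommRing R] (α : R)

lemma prod_Icc_add_one_eq_prod_Icc (k n : ℕ) :
    ∏ j ∈ Icc (k + 1) n, (α + 1 + j) = ∏ j ∈ Icc (k + 2) (n + 1), (α + j) := by
  rw [← map_add_right_Icc (k + 1) n 1, prod_map]
  exact prod_congr rfl fun j _ ↦ by simp only [addRightEmbedding_apply]; push_cast; ring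

lemma add_mul_prod_Icc_add_one {k n : ℕ} (hkn : k ≤ n) :
    (α + k + 1) * ∏ j ∈ Icc (k + 1) n, (α + 1 + j) =
      (α + n + 1) * ∏ j ∈ Icc (k + 1) n, (α + j) := by
  have hbot : ∏ j ∈ Icc (k + 1) (n + 1), (α + j) =
      (α + k + 1) * ∏ j ∈ Icc (k + 2) (n + 1), (α + j) := by
    rw [← insert_Icc_add_one_left_eq_Icc (by omega : k + 1 ≤ n + 1), prod_insert (by simp)]
    congr 1
    push_cast
    ring
  rw [prod_Icc_add_one_eq_prod_Icc, ← hbot, prod_Icc_succ_top (by omega)]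
  push_cast
  ring

lemma prod_Icc_add_one_eq_mul_prod {k n : ℕ} (hkn : k < n) :
    ∏ j ∈ Icc (k + 1) n, (α + 1 + j) = (α + n + 1) * ∏ j ∈ Icc (k + 2) n, (α + j) := by
  rw [prod_Icc_add_one_eq_prod_Icc, prod_Icc_succ_top (by omega)]
  push_cast
  ring

end ShiftedProducts

lemma coeff_laguerre (α : ℝ) (n m : ℕ) :
    (laguerre α n).coeff m =
      if m ≤ n then
        (-1) ^ m * (∏ j ∈ Icc (m + 1) n, (α + j)) / ((n - m).factorial * m.factorial)
      else 0 := by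
  simp only [laguerre, finsetSum_coeff, coeff_C_mul, coeff_X_pow, mul_ite, mul_one, mul_zero,
    sum_ite_eq, mem_range, Nat.lt_succ_iff]

theorem X_mul_laguerre_add_two_add_C_mul_laguerre (α : ℝ) (n : ℕ) :
    X * laguerre (α + 2) n + C (α + n + 1) * laguerre α n =
      (X + C (α + 1)) * laguerre (α + 1) n := by
  rw [add_mul]
  ext m
  rcases m with _ | k
  · have bottom := add_mul_prod_Icc_add_one α n.zero_le
    simp only [Nat.cast_zero, add_zero, zero_add] at bottom
    simp only [coeff_add, mul_coeff_zero, coeff_X_zero, zero_mul, zero_add, coeff_C_zero,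
      coeff_laguerre, if_pos n.zero_le, pow_zero, one_mul, mul_div_assoc', bottom]
  · simp only [coeff_add, coeff_X_mul, coeff_C_mul, coeff_laguerre]
    rcases lt_trichotomy k n with hkn | rfl | hnk
    · have hk1 : k + 1 ≤ n := hkn
      rw [if_pos hkn.le, if_pos hk1, if_pos hkn.le, if_pos hk1, show α + 2 = α + 1 + 1 by ring,
        prod_Icc_add_one_eq_mul_prod α hkn, prod_Icc_add_one_eq_mul_prod (α + 1) hkn]
      have top := add_mul_prod_Icc_add_one α hk1
      obtain ⟨m, rfl⟩ : ∃ m, n = k + 1 + m := ⟨n - (k + 1), by omega⟩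
      rw [show k + 1 + m - k = m + 1 by omega, show k + 1 + m - (k + 1) = m by omega,
        Nat.factorial_succ, Nat.factorial_succ]
      push_cast at top ⊢
      field_simp
      linear_combination (-1) ^ k * ((k : ℝ) + m + 2) * top
    · simp
    · simp [hnk.not_ge, hnk.not_gt]

theorem laguerre_mixed_recurrence_equal_deg_param_four (α : ℝ) (n : ℕ) :
    Polynomial.X ^ 2 * (Polynomial.X + Polynomial.C (α + 1)) * laguerre (α + 4) n =
      ((Polynomial.X + Polynomial.C (α + 3)) * (Polynomial.X + Polynomial.C (α + 2)) *
            (Polynomial.X + Polynomial.C (α + 1)) -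
          Polynomial.X * (Polynomial.X + Polynomial.C (α + 1)) *
            Polynomial.C (α + (n : ℝ) + 3) -
          Polynomial.X * (Polynomial.X + Polynomial.C (α + 3)) *
            Polynomial.C (α + (n : ℝ) + 2)) * laguerre (α + 2) n -
        (Polynomial.X + Polynomial.C (α + 3)) *
          Polynomial.C ((α + (n : ℝ) + 2) * (α + (n : ℝ) + 1)) * laguerre α n := by
  have h0 := X_mul_laguerre_add_two_add_C_mul_laguerre α n
  have h1 : X * laguerre (α + 3) n + C (α + n + 2) * laguerre (α + 1) n =
      (X + C (α + 2)) * laguerre (α + 2) n := by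
    convert X_mul_laguerre_add_two_add_C_mul_laguerre (α + 1) n using 2 <;> ring_nf
  have h2 : X * laguerre (α + 4) n + C (α + n + 3) * laguerre (α + 2) n =
      (X + C (α + 3)) * laguerre (α + 3) n := by
    convert X_mul_laguerre_add_two_add_C_mul_laguerre (α + 2) n using 2 <;> ring_nf
  rw [C_mul]
  linear_combination X * (X + C (α + 1)) * h2 + (X + C (α + 1)) * (X + C (α + 3)) * h1 +
    (X + C (α + 3)) * C (α + n + 2) * h0
end
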